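/- Let {λ_k} satisfy λ₁ > λ₂ > ⋯ ≥ 0 with Σ_k λ_k < ∞. Fix K ≥ 1. Suppose for each n, Σ_{k=1}^∞ a_{nk}² ≤ 1 and Σ_{k=K+1}^∞ a_{nk}² λ_k → λ_{K+1} as n → ∞. Then a_{n(K+1)}² → 1 and Σ_{k=1}^K a_{nk}² + Σ_{k=K+2}^∞ a_{nk}² → 0. -/

import Mathlib

/-!
Write `b k = a_{nk}²`. Since `λ` is decreasing and nonnegative and `Σ_k b k ≤ 1`,
`Σ_{k ≥ K} b k λ_k ≤ b_K λ_K + λ_{K+1} (1 - b_K)`, i.e.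
`Σ_{k ≥ K} b k λ_k - λ_{K+1} ≤ b_K (λ_K - λ_{K+1})`.
The left side tends to `λ_K - λ_{K+1} > 0`, which squeezes `b_K` up to `1`, and then everything
else, bounded by `1 - b_K`, goes to `0`.
-/

open Filter Topology Finset

section WeightedTail

variable {b lam : ℕ → ℝ}

theorem tsum_eq_sum_range_add_add_tsum (hb : Summable b) (K : ℕ) :
    ∑' k, b k = ∑ k ∈ range K, b k + (b K + ∑' k, b (k + K + 1)) := by
  simp only [← hb.sum_add_tsum_nat_add (K + 1), sum_range_succ, add_assoc]

theorem summable_mul_of_antitone (hb0 : ∀ k, 0 ≤ b k) (hb : Summable b)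
    (hlam : Antitone lam) (hlam0 : ∀ k, 0 ≤ lam k) : Summable fun k => b k * lam k :=
  (hb.mul_right (lam 0)).of_nonneg_of_le (fun k => mul_nonneg (hb0 k) (hlam0 k))
    fun k => mul_le_mul_of_nonneg_left (hlam (Nat.zero_le k)) (hb0 k)

theorem tsum_mul_le_of_antitone (hb0 : ∀ k, 0 ≤ b k) (hb : Summable b)
    (hlam : Antitone lam) (hlam0 : ∀ k, 0 ≤ lam k) (K : ℕ) :
    ∑' k, b (k + K) * lam (k + K) ≤ b K * lam K + lam (K + 1) * ∑' k, b (k + K + 1) := by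
  have hsum := (summable_nat_add_iff K).2 (summable_mul_of_antitone hb0 hb hlam hlam0)
  have htail : Summable fun k => b (k + K + 1) := by
    simpa only [add_assoc] using (summable_nat_add_iff (K + 1)).2 hb
  rw [hsum.tsum_eq_zero_add, zero_add, ← tsum_mul_left]
  gcongr b K * lam K + ?_
  refine Summable.tsum_le_tsum (fun k => ?_) ?_ (htail.mul_left _)
  · rw [Nat.add_right_comm k 1 K, mul_comm (lam (K + 1))]
    exact mul_le_mul_of_nonneg_left (hlam (by omega)) (hb0 _)
  · simpa only [Nat.add_right_comm] using (summable_nat_add_iff 1).2 hsum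

theorem tsum_mul_sub_le_mul_sub (hb0 : ∀ k, 0 ≤ b k) (hb : Summable b) (hb1 : ∑' k, b k ≤ 1)
    (hlam : Antitone lam) (hlam0 : ∀ k, 0 ≤ lam k) (K : ℕ) :
    ∑' k, b (k + K) * lam (k + K) - lam (K + 1) ≤ b K * (lam K - lam (K + 1)) := by
  have hhead : 0 ≤ ∑ k ∈ range K, b k := sum_nonneg fun k _ => hb0 k
  have htail : ∑' k, b (k + K + 1) ≤ 1 - b K := by
    linarith [tsum_eq_sum_range_add_add_tsum hb K]
  have := tsum_mul_le_of_antitone hb0 hb hlam hlam0 K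
  nlinarith [hlam0 (K + 1)]

end WeightedTail

theorem tendsto_of_tendsto_tsum_mul {b : ℕ → ℕ → ℝ} {lam : ℕ → ℝ} (hb0 : ∀ n k, 0 ≤ b n k)
    (hb : ∀ n, Summable (b n)) (hb1 : ∀ n, ∑' k, b n k ≤ 1)
    (hlam : Antitone lam) (hlam0 : ∀ k, 0 ≤ lam k) {K : ℕ} (hgap : lam (K + 1) < lam K)
    (hconv : Tendsto (fun n => ∑' k, b n (k + K) * lam (k + K)) atTop (𝓝 (lam K))) :
    Tendsto (fun n => b n K) atTop (𝓝 1) ∧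
      Tendsto (fun n => ∑ k ∈ range K, b n k + ∑' k, b n (k + K + 1)) atTop (𝓝 0) := by
  have hgap' : 0 < lam K - lam (K + 1) := sub_pos.2 hgap
  have hrest_nonneg n : 0 ≤ ∑ k ∈ range K, b n k + ∑' k, b n (k + K + 1) :=
    add_nonneg (sum_nonneg fun k _ => hb0 n k) (tsum_nonneg fun k => hb0 n _)
  have hrest_le n : ∑ k ∈ range K, b n k + ∑' k, b n (k + K + 1) ≤ 1 - b n K := by
    linarith [tsum_eq_sum_range_add_add_tsum (hb n) K, hb1 n]
  have hlower : Tendsto (fun n => (∑' k, b n (k + K) * lam (k + K) - lam (K + 1)) /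
      (lam K - lam (K + 1))) atTop (𝓝 1) := by
    simpa only [div_self hgap'.ne'] using (hconv.sub_const (lam (K + 1))).div_const (lam K - lam (K + 1))
  have hK : Tendsto (fun n => b n K) atTop (𝓝 1) :=
    tendsto_of_tendsto_of_tendsto_of_le_of_le hlower tendsto_const_nhds
      (fun n => (div_le_iff₀ hgap').2 (tsum_mul_sub_le_mul_sub (hb0 n) (hb n) (hb1 n) hlam hlam0 K))
      fun n => by linarith [hrest_nonneg n, hrest_le n]
  refine ⟨hK, tendsto_of_tendsto_of_tendsto_of_le_of_le tendsto_const_nhds ?_ hrest_nonneg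
    hrest_le⟩
  simpa only [sub_self] using hK.const_sub 1

theorem stmt_6_general (K : ℕ)
    (lam : ℕ → ℝ) (hpos : ∀ k, 0 ≤ lam k) (hanti : StrictAnti lam)
    (a : ℕ → ℕ → ℝ)
    (hsq : ∀ n, Summable (fun k => (a n k) ^ 2))
    (hle : ∀ n, (∑' k, (a n k) ^ 2) ≤ 1)
    (hconv : Tendsto (fun n => ∑' k, (a n (k + K)) ^ 2 * lam (k + K)) atTop (nhds (lam K))) :
    Tendsto (fun n => (a n K) ^ 2) atTop (nhds 1) ∧
      Tendsto (fun n => (∑ k ∈ Finset.range K, (a n k) ^ 2)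
        + ∑' k, (a n (k + K + 1)) ^ 2) atTop (nhds 0) :=
  tendsto_of_tendsto_tsum_mul (b := fun n k => a n k ^ 2) (fun _ _ => sq_nonneg _) hsq hle
    hanti.antitone hpos (hanti K.lt_succ_self) hconv

/-- Induction step: if `λ₁ > λ₂ > ⋯ ≥ 0` is summable, `Σ_k a_{nk}² ≤ 1`, and the tail sum
`Σ_{k=K+1}^∞ a_{nk}² λ_k → λ_{K+1}`, then `a_{n(K+1)}² → 1` and
`Σ_{k=1}^K a_{nk}² + Σ_{k=K+2}^∞ a_{nk}² → 0`.
(Indices are 0-based: `lam K` is `λ_{K+1}`, and the tail `Σ_{k=K+1}^∞` becomes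
`∑' k, ⬝ (k + K)`.) -/
theorem stmt_6 (K : ℕ) (hK : 1 ≤ K)
    (lam : ℕ → ℝ) (hpos : ∀ k, 0 ≤ lam k) (hanti : StrictAnti lam)
    (hsum : Summable lam)
    (a : ℕ → ℕ → ℝ)
    (hsq : ∀ n, Summable (fun k => (a n k) ^ 2))
    (hle : ∀ n, (∑' k, (a n k) ^ 2) ≤ 1)
    (hconv : Tendsto (fun n => ∑' k, (a n (k + K)) ^ 2 * lam (k + K)) atTop (nhds (lam K))) :
    Tendsto (fun n => (a n K) ^ 2) atTop (nhds 1) ∧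
      Tendsto (fun n => (∑ k ∈ Finset.range K, (a n k) ^ 2)
        + ∑' k, (a n (k + K + 1)) ^ 2) atTop (nhds 0) :=
  stmt_6_general K lam hpos hanti a hsq hle hconv
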